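/- Let f : B → M be a smooth map between compact oriented n-manifolds (B possibly with corners, with the regular value p in the image of the interior only), and let p ∈ M be a regular value of f not in the image of ∂B. Then f^{-1}(p) is finite, and for any n-form ω on M with ∫_M ω = 1 and support contained in a sufficiently small neighborhood of p, the integral ∫_B f*ω equals the sum over x ∈ f^{-1}(p) of sgn(df_x), where sgn(df_x) = ±1 according to whether df_x preserves or reverses orientation. -/

import Mathlib

/-!
Near each preimage `x` of the regular value `p` the inverse function theorem makes `f` a
diffeomorphism from a small open set `V x` onto an open neighbourhood of `p`, on which the
Jacobian has constant sign. There are finitely many such `x` (the fibre is compact and discrete),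
so the `V x` may be taken pairwise disjoint and inside the interior of `B`; since `p` is not
attained on the compact set `B \ ⋃ V x`, a small ball around `p` misses its image and lies in
every `f '' V x`. For `ω` supported in that ball, `ω ∘ f` vanishes off `⋃ V x`, and on each
`V x` the change of variables formula turns `∫ (ω ∘ f) · det df` into
`sgn (det df_x) · ∫ ω`.
-/

open MeasureTheory Set Filter Topology

theorem Real.sign_mul_abs (r : ℝ) : Real.sign r * |r| = r := by
  rcases lt_trichotomy r 0 with hr | rfl | hr
  · rw [Real.sign_of_neg hr, abs_of_neg hr]; ring
  · simp
  · rw [Real.sign_of_pos hr, abs_of_pos hr, one_mul]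

theorem ContinuousAt.eventually_sign_eq {X : Type*} [TopologicalSpace X] {g : X → ℝ} {x : X}
    (hg : ContinuousAt g x) (hx : g x ≠ 0) :
    ∀ᶠ y in 𝓝 x, Real.sign (g y) = Real.sign (g x) := by
  rcases hx.lt_or_gt with hneg | hpos
  · filter_upwards [hg.eventually_lt continuousAt_const hneg] with y hy
    rw [Real.sign_of_neg hy, Real.sign_of_neg hneg]
  · filter_upwards [continuousAt_const.eventually_lt hg hpos] with y hy
    rw [Real.sign_of_pos hy, Real.sign_of_pos hpos]

theorem Set.Finite.exists_pairwiseDisjoint_of_forall_nhds {X : Type*} [TopologicalSpace X]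
    [T2Space X] {S : Set X} (hS : S.Finite) {P : X → Set X → Prop}
    (hP : ∀ x ∈ S, ∀ N ∈ 𝓝 x, ∃ V ⊆ N, P x V) :
    ∃ V : X → Set X, (∀ x ∈ S, P x (V x)) ∧ S.PairwiseDisjoint V := by
  obtain ⟨T, hT, hTdisj⟩ := hS.t2_separation
  have hV : ∀ x, ∃ V ⊆ T x, x ∈ S → P x V := fun x => by
    by_cases hx : x ∈ S
    · obtain ⟨V, hVT, hPV⟩ := hP x hx (T x) ((hT x).2.mem_nhds (hT x).1)
      exact ⟨V, hVT, fun _ => hPV⟩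
    · exact ⟨∅, empty_subset _, fun h => absurd h hx⟩
  choose V hVT hPV using hV
  exact ⟨V, hPV, hTdisj.mono hVT⟩

theorem IsCompact.finite_inter_preimage_singleton {X Y : Type*} [TopologicalSpace X]
    [T2Space X] [TopologicalSpace Y] [T1Space Y] {B : Set X} {f : X → Y} {p : Y}
    (hB : IsCompact B) (hf : ContinuousOn f B)
    (hinj : ∀ x ∈ B ∩ f ⁻¹' {p}, ∃ V ∈ 𝓝 x, InjOn f V) : (B ∩ f ⁻¹' {p}).Finite := by
  have hK : IsCompact (B ∩ f ⁻¹' {p}) := hB.of_isClosed_subset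
    (hf.preimage_isClosed_of_isClosed hB.isClosed isClosed_singleton) inter_subset_left
  choose! V hV hVinj using hinj
  obtain ⟨t, htK, hcover⟩ := hK.elim_nhds_subcover V hV
  have hpiece : ∀ x ∈ t, (B ∩ f ⁻¹' {p} ∩ V x).Finite := fun x hx =>
    Subsingleton.finite fun y hy z hz =>
      hVinj x (htK x hx) hy.2 hz.2 (hy.1.2.trans hz.1.2.symm)
  refine (t.finite_toSet.biUnion hpiece).subset fun y hy => ?_
  obtain ⟨x, hx, hyx⟩ := mem_iUnion₂.1 (hcover hy)
  exact mem_iUnion₂.2 ⟨x, hx, hy, hyx⟩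

theorem biInter_image_diff_image_mem_nhds {X Y : Type*} [TopologicalSpace X]
    [TopologicalSpace Y] [T2Space Y] {B : Set X} {f : X → Y} {p : Y} {V : X → Set X}
    (hB : IsCompact B) (hf : ContinuousOn f B) (hfin : (B ∩ f ⁻¹' {p}).Finite)
    (hV : ∀ x ∈ B ∩ f ⁻¹' {p}, IsOpen (V x) ∧ x ∈ V x ∧ IsOpen (f '' V x)) :
    (⋂ x ∈ B ∩ f ⁻¹' {p}, f '' V x) \ f '' (B \ ⋃ x ∈ B ∩ f ⁻¹' {p}, V x) ∈ 𝓝 p := by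
  have hcompact : IsCompact (f '' (B \ ⋃ x ∈ B ∩ f ⁻¹' {p}, V x)) :=
    (hB.diff (isOpen_biUnion fun x hx => (hV x hx).1)).image_of_continuousOn
      (hf.mono sdiff_subset)
  refine inter_mem ((biInter_mem hfin).2 fun x hx => ?_) ?_
  · exact (hV x hx).2.2.mem_nhds ⟨x, (hV x hx).2.1, hx.2⟩
  · refine hcompact.isClosed.isOpen_compl.mem_nhds ?_
    rintro ⟨y, hy, rfl⟩
    exact hy.2 (mem_biUnion ⟨hy.1, rfl⟩ (hV y ⟨hy.1, rfl⟩).2.1)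

section LocalDiffeo

variable {E : Type*} [NormedAddCommGroup E] [NormedSpace ℝ E] [FiniteDimensional ℝ E]

structure IsLocalDiffeoNbhd (f : E → E) (x : E) (V : Set E) : Prop where
  isOpen : IsOpen V
  mem : x ∈ V
  differentiableAt : ∀ y ∈ V, DifferentiableAt ℝ f y
  injOn : InjOn f V
  isOpen_image : IsOpen (f '' V)
  sign_det_eq : ∀ y ∈ V, Real.sign (fderiv ℝ f y).det = Real.sign (fderiv ℝ f x).det

theorem exists_isLocalDiffeoNbhd_subset {f : E → E} {x : E} (hf : ContDiffAt ℝ 1 f x)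
    (hdet : (fderiv ℝ f x).det ≠ 0) {N : Set E} (hN : N ∈ 𝓝 x) :
    ∃ V ⊆ N, IsLocalDiffeoNbhd f x V := by
  have hstrict : HasStrictFDerivAt f
      ((fderiv ℝ f x).toContinuousLinearEquivOfDetNeZero hdet : E →L[ℝ] E) x := by
    rw [ContinuousLinearMap.coe_toContinuousLinearEquivOfDetNeZero]
    exact hf.hasStrictFDerivAt one_ne_zero
  set Φ := hstrict.toOpenPartialHomeomorph f
  have hdiff : ∀ᶠ y in 𝓝 x, DifferentiableAt ℝ f y :=
    (hf.eventually (by simp)).mono fun y hy => hy.differentiableAt one_ne_zero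
  have hsign : ∀ᶠ y in 𝓝 x, Real.sign (fderiv ℝ f y).det = Real.sign (fderiv ℝ f x).det :=
    (ContinuousLinearMap.continuous_det.continuousAt.comp
      (hf.continuousAt_fderiv one_ne_zero)).eventually_sign_eq hdet
  obtain ⟨O, hON, hOopen, hxO⟩ := mem_nhds_iff.1 (inter_mem hN (hdiff.and hsign))
  refine ⟨Φ.source ∩ O, inter_subset_right.trans fun y hy => (hON hy).1,
    Φ.open_source.inter hOopen, ⟨hstrict.mem_toOpenPartialHomeomorph_source, hxO⟩,
    fun y hy => (hON hy.2).2.1, ?_, ?_, fun y hy => (hON hy.2).2.2⟩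
  · rw [← hstrict.toOpenPartialHomeomorph_coe]
    exact Φ.injOn.mono inter_subset_left
  · rw [← hstrict.toOpenPartialHomeomorph_coe]
    exact Φ.isOpen_image_of_subset_source (Φ.open_source.inter hOopen) inter_subset_left

theorem IsLocalDiffeoNbhd.setIntegral_comp_mul_det [MeasurableSpace E] [BorelSpace E]
    {f : E → E} {x : E} {V : Set E} (h : IsLocalDiffeoNbhd f x V) (μ : Measure E)
    [μ.IsAddHaarMeasure] (ω : E → ℝ) :
    ∫ y in V, ω (f y) * (fderiv ℝ f y).det ∂μ =
      Real.sign (fderiv ℝ f x).det * ∫ y in f '' V, ω y ∂μ := by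
  rw [integral_image_eq_integral_abs_det_fderiv_smul μ h.isOpen.measurableSet
    (fun y hy => (h.differentiableAt y hy).hasFDerivAt.hasFDerivWithinAt) h.injOn,
    ← integral_const_mul]
  refine setIntegral_congr_fun h.isOpen.measurableSet fun y hy => ?_
  rw [smul_eq_mul, ← h.sign_det_eq y hy, ← mul_assoc, mul_comm _ (ω (f y)), Real.sign_mul_abs]

theorem setIntegral_comp_mul_det_eq_finsum_sign [MeasurableSpace E] [BorelSpace E]
    (μ : Measure E) [μ.IsAddHaarMeasure] {B S W : Set E} {f : E → E} {V : E → Set E}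
    (hB : MeasurableSet B) (hS : S.Finite) (hV : ∀ x ∈ S, IsLocalDiffeoNbhd f x (V x))
    (hVB : ∀ x ∈ S, V x ⊆ B) (hdisj : S.PairwiseDisjoint V)
    (hW : W ⊆ (⋂ x ∈ S, f '' V x) \ f '' (B \ ⋃ x ∈ S, V x)) {ω : E → ℝ}
    (hωW : Function.support ω ⊆ W) (hω : ∫ y, ω y ∂μ = 1)
    (hint : IntegrableOn (fun y => ω (f y) * (fderiv ℝ f y).det) B μ) :
    ∫ y in B, ω (f y) * (fderiv ℝ f y).det ∂μ = ∑ᶠ x ∈ S, Real.sign (fderiv ℝ f x).det := by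
  lift S to Finset E using hS
  rw [Finset.set_biUnion_coe] at hW
  have hvanish : ∀ y ∈ B \ ⋃ x ∈ S, V x, ω (f y) * (fderiv ℝ f y).det = 0 := by
    intro y hy
    rw [Function.notMem_support.1 fun h => (hW (hωW h)).2 ⟨y, hy, rfl⟩, zero_mul]
  have hlocal : ∀ x ∈ S, ∫ y in V x, ω (f y) * (fderiv ℝ f y).det ∂μ =
      Real.sign (fderiv ℝ f x).det := by
    intro x hx
    rw [(hV x hx).setIntegral_comp_mul_det, setIntegral_eq_integral_of_forall_compl_eq_zero,
      hω, mul_one]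
    exact fun y hy => Function.notMem_support.1 fun h => hy (mem_iInter₂.1 (hW (hωW h)).1 x hx)
  have hVB' : ⋃ x ∈ S, V x ⊆ B := iUnion₂_subset hVB
  rw [setIntegral_eq_of_subset_of_forall_sdiff_eq_zero hB hVB' hvanish,
    integral_biUnion_finset S (fun x hx => (hV x hx).isOpen.measurableSet) hdisj
      (fun x hx => hint.mono_set (hVB x hx)), finsum_mem_coe_finset]
  exact Finset.sum_congr rfl hlocal

end LocalDiffeo

/-- local degree counting formula: let B be a compact oriented n-manifold
(possibly with corners), presented in an oriented chart as a compact subset of ℝⁿ, let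
f : B → M be smooth (M an oriented n-manifold, presented in an oriented chart around the
point p), and let p be a regular value of f not in the image of the boundary ∂B (here the
frontier of B).  Then f⁻¹(p) is finite, and for every n-form ω on M — written as a
density `ω : ℝⁿ → ℝ` against the chart volume, so that its pullback f*ω has density
x ↦ ω(f x)·det(df_x) — with total integral 1 and support in a sufficiently small
neighborhood of p, the integral ∫_B f*ω equals Σ_{x ∈ f⁻¹(p)} sgn(det df_x). -/
theorem local_degree_counting {n : ℕ}
    (B U : Set (EuclideanSpace ℝ (Fin n)))
    (hBcompact : IsCompact B) (hBmeas : MeasurableSet B)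
    (hUopen : IsOpen U) (hBU : B ⊆ U)
    (f : EuclideanSpace ℝ (Fin n) → EuclideanSpace ℝ (Fin n))
    (hf : ContDiffOn ℝ 1 f U)
    (p : EuclideanSpace ℝ (Fin n))
    -- p is a regular value of f:
    (hreg : ∀ x ∈ B, f x = p → (fderiv ℝ f x).det ≠ 0)
    -- p is not in the image of the boundary of B:
    (hbd : p ∉ f '' (frontier B)) :
    {x | x ∈ B ∧ f x = p}.Finite ∧
    ∃ ε > 0, ∀ ω : EuclideanSpace ℝ (Fin n) → ℝ, Continuous ω →
      Function.support ω ⊆ Metric.ball p ε → (∫ y, ω y = 1) →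
      ∫ x in B, ω (f x) * (fderiv ℝ f x).det
        = ∑ᶠ x ∈ {x | x ∈ B ∧ f x = p}, Real.sign ((fderiv ℝ f x).det) := by
  have hfB : ContinuousOn f B := hf.continuousOn.mono hBU
  have hfiber_interior : B ∩ f ⁻¹' {p} ⊆ interior B := fun x hx => by
    by_contra h
    exact hbd ⟨x, hBcompact.isClosed.frontier_eq ▸ ⟨hx.1, h⟩, hx.2⟩
  have hloc : ∀ x ∈ B ∩ f ⁻¹' {p}, ∀ N ∈ 𝓝 x, ∃ V ⊆ N, IsLocalDiffeoNbhd f x V :=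
    fun x hx _ hN => exists_isLocalDiffeoNbhd_subset
      (hf.contDiffAt (hUopen.mem_nhds (hBU hx.1))) (hreg x hx.1 hx.2) hN
  have hfin : (B ∩ f ⁻¹' {p}).Finite := hBcompact.finite_inter_preimage_singleton hfB
    fun x hx =>
      let ⟨V, _, hV⟩ := hloc x hx univ univ_mem
      ⟨V, hV.isOpen.mem_nhds hV.mem, hV.injOn⟩
  obtain ⟨V, hV, hdisj⟩ := hfin.exists_pairwiseDisjoint_of_forall_nhds
    (P := fun x V => V ⊆ B ∧ IsLocalDiffeoNbhd f x V) fun x hx N hN =>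
      let ⟨V, hVN, hV⟩ :=
        hloc x hx _ (inter_mem hN (isOpen_interior.mem_nhds (hfiber_interior hx)))
      ⟨V, hVN.trans inter_subset_left, (hVN.trans inter_subset_right).trans interior_subset, hV⟩
  obtain ⟨ε, hε, hball⟩ := Metric.mem_nhds_iff.1 <| biInter_image_diff_image_mem_nhds hBcompact
    hfB hfin fun x hx => ⟨(hV x hx).2.isOpen, (hV x hx).2.mem, (hV x hx).2.isOpen_image⟩
  refine ⟨hfin, ε, hε, fun ω hω hsupp hω1 => ?_⟩
  have hint : IntegrableOn (fun x => ω (f x) * (fderiv ℝ f x).det) B :=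
    ((hω.comp_continuousOn hfB).mul (ContinuousLinearMap.continuous_det.comp_continuousOn
      ((hf.continuousOn_fderiv_of_isOpen hUopen le_rfl).mono hBU))).integrableOn_compact hBcompact
  exact setIntegral_comp_mul_det_eq_finsum_sign volume hBmeas hfin (fun x hx => (hV x hx).2)
    (fun x hx => (hV x hx).1) hdisj hball hsupp hω1 hint
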